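/- Let T>0 and 0<γ<γ'≤1. Let f : ℝ → ℝ satisfy f(t)=0 for all t ≤ 0 and suppose f is γ'-Hölder on (−∞,T] with seminorm ‖f‖_{γ'}. For an integer n ≥ 1 define the smoothed function f^n(t) = n ∫_{max(t−1/n,0)}^{t} f(s) ds for t ∈ [0,T]. Then the γ-Hölder seminorm of f^n − f on [0,T] satisfies ‖f^n − f‖_{γ,[0,T]} ≤ 2‖f‖_{γ'} · n^{−(γ'−γ)}. -/

import Mathlib

/-!
Since `f` vanishes on `(-∞, 0]`, `f^n` is the moving average `n ∫_{t-1/n}^t f` of `f`.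
Averaging commutes with translations, so `f^n` inherits the `γ'`-Hölder bound of `f`, and
`g = f^n - f` satisfies `|g t - g s| ≤ 2C|t - s|^γ'`; on the other hand `|g t| ≤ C n^{-γ'}`,
because on the averaging window `f` stays within `C n^{-γ'}` of `f t`. Interpolating,
`min (|t - s|^γ', n^{-γ'}) ≤ n^{-(γ'-γ)} |t - s|^γ`.
-/

open Set intervalIntegral Filter Topology
open MeasureTheory (volume)

theorem continuousOn_of_abs_sub_le_mul_rpow {f : ℝ → ℝ} {S : Set ℝ} {C α : ℝ} (hα : 0 < α)
    (hf : ∀ s ∈ S, ∀ t ∈ S, |f t - f s| ≤ C * |t - s| ^ α) : ContinuousOn f S := by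
  intro x hx
  have hbound : Tendsto (fun y => C * |y - x| ^ α) (𝓝[S] x) (𝓝 0) := by
    have : Continuous fun y : ℝ => C * |y - x| ^ α :=
      continuous_const.mul ((continuous_abs.comp (continuous_id.sub continuous_const)).rpow_const
        fun _ => Or.inr hα.le)
    simpa [Real.zero_rpow hα.ne'] using (this.tendsto x).mono_left nhdsWithin_le_nhds
  refine tendsto_iff_norm_sub_tendsto_zero.2 (squeeze_zero_norm' ?_ hbound)
  filter_upwards [self_mem_nhdsWithin] with y hy
  simpa using hf x hx y hy

theorem min_rpow_le_rpow_sub_mul_rpow {d h α β : ℝ} (hd : 0 ≤ d) (hh : 0 ≤ h) (hβ : 0 ≤ β)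
    (hβα : β ≤ α) : min (d ^ α) (h ^ α) ≤ h ^ (α - β) * d ^ β := by
  have hαβ : 0 ≤ α - β := sub_nonneg.2 hβα
  rcases le_total d h with hdh | hhd
  · calc min (d ^ α) (h ^ α) ≤ d ^ α := min_le_left _ _
      _ = d ^ (α - β) * d ^ β := by rw [← Real.rpow_add_of_nonneg hd hαβ hβ, sub_add_cancel]
      _ ≤ h ^ (α - β) * d ^ β := by gcongr
  · calc min (d ^ α) (h ^ α) ≤ h ^ α := min_le_right _ _
      _ = h ^ (α - β) * h ^ β := by rw [← Real.rpow_add_of_nonneg hh hαβ hβ, sub_add_cancel]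
      _ ≤ h ^ (α - β) * d ^ β := by gcongr

noncomputable def movingAverage (h : ℝ) (f : ℝ → ℝ) (t : ℝ) : ℝ :=
  h⁻¹ * ∫ u in (t - h)..t, f u

theorem integral_max_zero_eq {f : ℝ → ℝ} {a t : ℝ} (hf0 : ∀ u ≤ 0, f u = 0)
    (hf : IntervalIntegrable f volume a t) (ht : 0 ≤ t) :
    ∫ u in (max a 0)..t, f u = ∫ u in a..t, f u := by
  rcases le_total 0 a with ha | ha
  · rw [max_eq_left ha]
  · have hzero : ∫ u in a..0, f u = 0 := by
      rw [integral_congr (g := fun _ => 0) fun u hu => hf0 u (by simpa [ha] using hu.2)]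
      simp
    rw [max_eq_right ha, ← integral_add_adjacent_intervals (b := 0)
      (hf.mono_set (uIcc_subset_uIcc_left (by simp [uIcc_of_le (ha.trans ht), ha, ht])))
      (hf.mono_set (uIcc_subset_uIcc_right (by simp [uIcc_of_le (ha.trans ht), ha, ht]))),
      hzero, zero_add]

section Holder

variable {f : ℝ → ℝ} {T C α : ℝ}

theorem holder_const_nonneg (hf : ∀ s ≤ T, ∀ t ≤ T, |f t - f s| ≤ C * |t - s| ^ α) : 0 ≤ C := by
  simpa using (abs_nonneg _).trans (hf (T - 1) (by linarith) T le_rfl)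

theorem intervalIntegrable_of_holder (hα : 0 < α)
    (hf : ∀ s ≤ T, ∀ t ≤ T, |f t - f s| ≤ C * |t - s| ^ α) {a b : ℝ} (ha : a ≤ T) (hb : b ≤ T) :
    IntervalIntegrable f volume a b :=
  (continuousOn_of_abs_sub_le_mul_rpow hα fun s hs t ht => hf s hs t ht).mono
    (fun _ hx => hx.2.trans (max_le ha hb)) |>.intervalIntegrable

theorem movingAverage_sub_self (hα : 0 < α)
    (hf : ∀ s ≤ T, ∀ t ≤ T, |f t - f s| ≤ C * |t - s| ^ α) {h t : ℝ} (hh : 0 < h) (ht : t ≤ T) :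
    movingAverage h f t - f t = h⁻¹ * ∫ u in (t - h)..t, (f u - f t) := by
  rw [movingAverage, integral_sub (intervalIntegrable_of_holder hα hf (by linarith) ht)
    intervalIntegrable_const, integral_const, smul_eq_mul, sub_sub_cancel, mul_sub,
    inv_mul_cancel_left₀ hh.ne']

theorem abs_movingAverage_sub_self_le (hα : 0 < α)
    (hf : ∀ s ≤ T, ∀ t ≤ T, |f t - f s| ≤ C * |t - s| ^ α) {h t : ℝ} (hh : 0 < h) (ht : t ≤ T) :
    |movingAverage h f t - f t| ≤ C * h ^ α := by
  have hint : ‖∫ u in (t - h)..t, (f u - f t)‖ ≤ C * h ^ α * |t - (t - h)| := by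
    refine norm_integral_le_of_norm_le_const fun u hu => ?_
    rw [uIoc_of_le (by linarith)] at hu
    refine (hf t ht u (hu.2.trans ht)).trans ?_
    gcongr
    · exact holder_const_nonneg hf
    · rw [abs_of_nonpos (by linarith [hu.2])]; linarith [hu.1]
  rw [movingAverage_sub_self hα hf hh ht, abs_mul, abs_inv, abs_of_pos hh]
  rw [Real.norm_eq_abs, sub_sub_cancel, abs_of_pos hh] at hint
  calc h⁻¹ * |∫ u in (t - h)..t, (f u - f t)| ≤ h⁻¹ * (C * h ^ α * h) := by gcongr
    _ = C * h ^ α := by field_simp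

theorem abs_movingAverage_sub_le (hα : 0 < α)
    (hf : ∀ s ≤ T, ∀ t ≤ T, |f t - f s| ≤ C * |t - s| ^ α) {h s t : ℝ} (hh : 0 < h) (hs : s ≤ T)
    (ht : t ≤ T) : |movingAverage h f t - movingAverage h f s| ≤ C * |t - s| ^ α := by
  have hshift : ∫ u in (t - h)..t, f u = ∫ u in (s - h)..s, f (u + (t - s)) := by
    rw [integral_comp_add_right]; ring_nf
  have hint : ‖∫ u in (s - h)..s, (f (u + (t - s)) - f u)‖ ≤ C * |t - s| ^ α * |s - (s - h)| := by
    refine norm_integral_le_of_norm_le_const fun u hu => ?_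
    rw [uIoc_of_le (by linarith)] at hu
    simpa using hf u (hu.2.trans hs) (u + (t - s)) (by linarith [hu.2])
  have hsub : movingAverage h f t - movingAverage h f s =
      h⁻¹ * ∫ u in (s - h)..s, (f (u + (t - s)) - f u) := by
    have hshifted : IntervalIntegrable (fun u => f (u + (t - s))) volume (s - h) s := by
      simpa using (intervalIntegrable_of_holder hα hf (a := t - h) (by linarith) ht).comp_add_right
        (t - s)
    rw [movingAverage, movingAverage, hshift, ← mul_sub,
      integral_sub hshifted (intervalIntegrable_of_holder hα hf (by linarith) hs)]
  rw [hsub, abs_mul, abs_inv, abs_of_pos hh]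
  rw [Real.norm_eq_abs, sub_sub_cancel, abs_of_pos hh] at hint
  calc h⁻¹ * |∫ u in (s - h)..s, (f (u + (t - s)) - f u)| ≤ h⁻¹ * (C * |t - s| ^ α * h) := by
        gcongr
    _ = C * |t - s| ^ α := by field_simp

theorem abs_movingAverage_sub_self_sub_le {β : ℝ} (hβ : 0 ≤ β) (hβα : β ≤ α) (hα : 0 < α)
    (hf : ∀ s ≤ T, ∀ t ≤ T, |f t - f s| ≤ C * |t - s| ^ α) {h s t : ℝ} (hh : 0 < h) (hs : s ≤ T)
    (ht : t ≤ T) :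
    |(movingAverage h f t - f t) - (movingAverage h f s - f s)| ≤
      2 * C * h ^ (α - β) * |t - s| ^ β := by
  have hnear : |(movingAverage h f t - f t) - (movingAverage h f s - f s)| ≤ 2 * C * |t - s| ^ α :=
    calc _ = |(movingAverage h f t - movingAverage h f s) - (f t - f s)| := by ring_nf
      _ ≤ |movingAverage h f t - movingAverage h f s| + |f t - f s| := abs_sub _ _
      _ ≤ C * |t - s| ^ α + C * |t - s| ^ α :=
        add_le_add (abs_movingAverage_sub_le hα hf hh hs ht) (hf s hs t ht)
      _ = 2 * C * |t - s| ^ α := by ring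
  have hfar : |(movingAverage h f t - f t) - (movingAverage h f s - f s)| ≤ 2 * C * h ^ α :=
    calc _ ≤ |movingAverage h f t - f t| + |movingAverage h f s - f s| := abs_sub _ _
      _ ≤ C * h ^ α + C * h ^ α :=
        add_le_add (abs_movingAverage_sub_self_le hα hf hh ht)
          (abs_movingAverage_sub_self_le hα hf hh hs)
      _ = 2 * C * h ^ α := by ring
  have hC : 0 ≤ 2 * C := by linarith [holder_const_nonneg hf]
  calc _ ≤ 2 * C * min (|t - s| ^ α) (h ^ α) := by
        rw [mul_min_of_nonneg _ _ hC]; exact le_min hnear hfar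
    _ ≤ 2 * C * (h ^ (α - β) * |t - s| ^ β) := by
      gcongr; exact min_rpow_le_rpow_sub_mul_rpow (abs_nonneg _) hh.le hβ hβα
    _ = 2 * C * h ^ (α - β) * |t - s| ^ β := by ring

end Holder

theorem stmt_2_general (T : ℝ) (γ γ' : ℝ) (hγ : 0 < γ) (hγγ' : γ < γ')
    (f : ℝ → ℝ) (hf0 : ∀ t ≤ (0:ℝ), f t = 0)
    (C : ℝ) (hf : ∀ s ≤ T, ∀ t ≤ T, |f t - f s| ≤ C * |t - s| ^ γ')
    (n : ℕ) (hn : 1 ≤ n)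
    (fn : ℝ → ℝ)
    (hfn : ∀ t ∈ Set.Icc (0:ℝ) T, fn t = n * ∫ s in (max (t - 1 / n) 0)..t, f s) :
    ∀ s ∈ Set.Icc (0:ℝ) T, ∀ t ∈ Set.Icc (0:ℝ) T,
      |(fn t - f t) - (fn s - f s)| ≤ 2 * C * (n : ℝ) ^ (-(γ' - γ)) * |t - s| ^ γ := by
  have hγ' : 0 < γ' := hγ.trans hγγ'
  have hn' : (0 : ℝ) < 1 / n := one_div_pos.2 (by exact_mod_cast hn)
  have hfn_avg : ∀ t ∈ Icc (0:ℝ) T, fn t = movingAverage (1 / n) f t := fun t ht => by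
    rw [hfn t ht, integral_max_zero_eq hf0 (intervalIntegrable_of_holder hγ' hf
      (by linarith [ht.2]) ht.2) ht.1, movingAverage, one_div, inv_inv]
  intro s hs t ht
  rw [hfn_avg s hs, hfn_avg t ht, Real.rpow_neg (Nat.cast_nonneg n), ← Real.inv_rpow
    (Nat.cast_nonneg n), ← one_div]
  exact abs_movingAverage_sub_self_sub_le hγ.le hγγ'.le hγ' hf hn' hs.2 ht.2

/-- Lemma 5.4 of the paper (deterministic, pathwise content): if `f` vanishes on
`(-∞,0]` and is `γ'`-Hölder on `(-∞,T]` with seminorm `C`, then for `0 < γ < γ'`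
the moving average `f^n(t) = n ∫_{max(t−1/n,0)}^t f(s) ds` satisfies
`‖f^n − f‖_{γ,[0,T]} ≤ 2 C n^{−(γ'−γ)}`. -/
theorem stmt_2 (T : ℝ) (hT : 0 < T) (γ γ' : ℝ) (hγ : 0 < γ) (hγγ' : γ < γ')
    (hγ'1 : γ' ≤ 1)
    (f : ℝ → ℝ) (hf0 : ∀ t ≤ (0:ℝ), f t = 0)
    (C : ℝ) (hf : ∀ s ≤ T, ∀ t ≤ T, |f t - f s| ≤ C * |t - s| ^ γ')
    (n : ℕ) (hn : 1 ≤ n)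
    (fn : ℝ → ℝ)
    (hfn : ∀ t ∈ Set.Icc (0:ℝ) T, fn t = n * ∫ s in (max (t - 1 / n) 0)..t, f s) :
    ∀ s ∈ Set.Icc (0:ℝ) T, ∀ t ∈ Set.Icc (0:ℝ) T,
      |(fn t - f t) - (fn s - f s)| ≤ 2 * C * (n : ℝ) ^ (-(γ' - γ)) * |t - s| ^ γ :=
  stmt_2_general T γ γ' hγ hγγ' f hf0 C hf n hn fn hfn
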